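/- arXiv:1805.11392 — 7 statements merged into one kernel-verified Lean document; each statement's English description precedes it below -/
import Mathlib

section
/- A Boolean algebra has at least 2^n elements if and only if it contains n pairwise-disjoint nonzero elements, i.e., elements x_1, ..., x_n all different from 0 such that x_i ∧ x_j = 0 for all i ≠ j. -/
/-!
Below any `b`, a nonzero `a ≤ b` splits the interval: `Iic b ≃ Iic a × Iic (b \ a)`. If `Iic b`
has at least `2 ^ (n + 1)` elements, we may choose `a` so that `Iic (b \ a)` keeps at least
`2 ^ n`: an atom when `Iic b` is finite (it halves the count), and otherwise an element whose
complement in `b` still has infinitely many elements below it. Peeling off such elements `n` times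
gives `n` disjoint nonzero elements. Conversely, `n` disjoint nonzero elements have `2 ^ n`
distinct joins.
-/

open Function

section
variable {B : Type*} [BooleanAlgebra B] {b c : B}

def iicEquivIicProdIicSdiff (hcb : c ≤ b) : Set.Iic b ≃ Set.Iic c × Set.Iic (b \ c) where
  toFun y := (⟨y ⊓ c, inf_le_right⟩, ⟨y \ c, sdiff_le_sdiff_right y.2⟩)
  invFun p := ⟨p.1 ⊔ p.2, sup_le (p.1.2.trans hcb) (p.2.2.trans sdiff_le)⟩
  left_inv y := Subtype.ext (sup_inf_sdiff (y : B) c)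
  right_inv := by
    rintro ⟨⟨u, hu⟩, ⟨v, hv⟩⟩
    have hvc : Disjoint v c := disjoint_sdiff_self_left.mono_left hv
    ext
    · simp [inf_sup_right, inf_eq_left.2 hu, hvc.eq_bot]
    · simp [sup_sdiff, sdiff_eq_bot_iff.2 hu, hvc.sdiff_eq_left]

theorem encard_Iic_eq_mul (hcb : c ≤ b) :
    (Set.Iic b).encard = (Set.Iic c).encard * (Set.Iic (b \ c)).encard := by
  simp only [Set.encard, ENat.card_congr (iicEquivIicProdIicSdiff hcb), ENat.card_prod]

theorem exists_isAtom_le_of_finite_Iic (hb : b ≠ ⊥) (hfin : (Set.Iic b).Finite) :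
    ∃ a, IsAtom a ∧ a ≤ b := by
  have := hfin.to_subtype
  obtain ⟨⟨a, hab⟩, ha, -⟩ := (eq_bot_or_exists_atom_le (⊤ : Set.Iic b)).resolve_left
    (fun h => hb (congrArg Subtype.val h))
  exact ⟨a, ha.of_isAtom_coe_Iic, hab⟩

theorem exists_ne_bot_le_infinite_Iic_sdiff (h : (Set.Iic b).Infinite) :
    ∃ a, a ≠ ⊥ ∧ a ≤ b ∧ (Set.Iic (b \ a)).Infinite := by
  obtain ⟨c, hcb : c ≤ b, hc⟩ := (h.sdiff (Set.toFinite {⊥, b})).nonempty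
  simp only [Set.mem_insert_iff, Set.mem_singleton_iff, not_or] at hc
  by_cases hsdiff : (Set.Iic (b \ c)).Infinite
  · exact ⟨c, hc.1, hcb, hsdiff⟩
  refine ⟨b \ c, fun h => hc.2 (hcb.antisymm (sdiff_eq_bot_iff.1 h)), sdiff_le, ?_⟩
  rw [sdiff_sdiff_eq_self hcb]
  rw [← Set.encard_eq_top_iff] at h hsdiff ⊢
  rw [encard_Iic_eq_mul hcb] at h
  by_contra hc'
  exact WithTop.mul_ne_top hc' hsdiff h

theorem exists_ne_bot_le_two_pow_le_encard_Iic_sdiff {n : ℕ}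
    (h : 2 ^ (n + 1) ≤ (Set.Iic b).encard) :
    ∃ a, a ≠ ⊥ ∧ a ≤ b ∧ 2 ^ n ≤ (Set.Iic (b \ a)).encard := by
  rcases (Set.Iic b).finite_or_infinite with hfin | hinf
  · have hb : b ≠ ⊥ := by
      rintro rfl
      rw [Set.Iic_bot, Set.encard_singleton] at h
      exact h.not_gt (by exact_mod_cast Nat.one_lt_two_pow n.succ_ne_zero)
    obtain ⟨a, ha, hab⟩ := exists_isAtom_le_of_finite_Iic hb hfin
    refine ⟨a, ha.1, hab, ?_⟩
    rwa [encard_Iic_eq_mul hab, ha.Iic_eq, Set.encard_pair ha.1.symm, pow_succ',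
      ENat.mul_le_mul_left_iff two_ne_zero (by decide)] at h
  · obtain ⟨a, ha, hab, hinf'⟩ := exists_ne_bot_le_infinite_Iic_sdiff hinf
    exact ⟨a, ha, hab, by simp [hinf'.encard_eq]⟩

theorem exists_pairwise_disjoint_of_two_pow_le_encard_Iic (n : ℕ)
    (h : 2 ^ n ≤ (Set.Iic b).encard) :
    ∃ x : Fin n → B, (∀ i, x i ≠ ⊥) ∧ (∀ i, x i ≤ b) ∧ Pairwise (Disjoint on x) := by
  induction n generalizing b with
  | zero => exact ⟨finZeroElim, finZeroElim, finZeroElim, fun i => i.elim0⟩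
  | succ n ih =>
    obtain ⟨a, ha, hab, h'⟩ := exists_ne_bot_le_two_pow_le_encard_Iic_sdiff h
    obtain ⟨x, hx, hxb, hxd⟩ := ih h'
    refine ⟨Fin.cons a x, Fin.cases ha hx, Fin.cases hab fun i => (hxb i).trans sdiff_le, ?_⟩
    rw [pairwise_fin_succ_iff_of_isSymm]
    exact ⟨fun i => disjoint_sdiff_self_right.mono_right (hxb i), hxd⟩

theorem Finset.sup_injective_of_pairwise_disjoint {ι : Type*} {x : ι → B} (hx : ∀ i, x i ≠ ⊥)
    (hd : Pairwise (Disjoint on x)) : Injective fun s : Finset ι => s.sup x := by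
  have subset_of_sup_le {s t : Finset ι} (h : s.sup x ≤ t.sup x) : s ⊆ t := by
    intro i hi
    by_contra hit
    have hdisj : Disjoint (x i) (t.sup x) :=
      Finset.disjoint_sup_right.2 fun j hj => hd fun hij => hit (hij ▸ hj)
    exact hx i (hdisj.eq_bot_of_le ((Finset.le_sup hi).trans h))
  exact fun s t h => (subset_of_sup_le h.le).antisymm (subset_of_sup_le h.ge)

end

theorem stmt_1_general (B : Type*) [BooleanAlgebra B] (n : ℕ) :
    (∃ f : Fin (2 ^ n) → B, Function.Injective f) ↔
      ∃ x : Fin n → B, (∀ i, x i ≠ ⊥) ∧ (∀ i j, i ≠ j → x i ⊓ x j = ⊥) := by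
  simp only [← disjoint_iff]
  constructor
  · rintro ⟨f, hf⟩
    have h : 2 ^ n ≤ (Set.Iic (⊤ : B)).encard := by
      simpa using ENat.card_le_card_of_injective hf
    obtain ⟨x, hx, -, hxd⟩ := exists_pairwise_disjoint_of_two_pow_le_encard_Iic n h
    exact ⟨x, hx, hxd⟩
  · rintro ⟨x, hx, hxd⟩
    let e : Fin (2 ^ n) ≃ Finset (Fin n) := (Fintype.equivFinOfCardEq (by simp)).symm
    exact ⟨_, (Finset.sup_injective_of_pairwise_disjoint hx hxd).comp e.injective⟩

/-- A Boolean algebra has at least `2^n` elements iff it contains `n` pairwise-disjoint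
nonzero elements. -/
theorem stmt_1 (B : Type*) [BooleanAlgebra B] (n : ℕ) (hn : 0 < n) :
    (∃ f : Fin (2 ^ n) → B, Function.Injective f) ↔
      ∃ x : Fin n → B, (∀ i, x i ≠ ⊥) ∧ (∀ i j, i ≠ j → x i ⊓ x j = ⊥) :=
  stmt_1_general B n
end

section
/- For any realizability structure S (a set of poles), the associated relation ⊳_S, defined by P ⊳_S Q iff for every pole ⫫ ∈ S, Q ⊆ ⫫ implies P ∩ ⫫ ≠ ∅, is a multi-evaluation relation. -/
variable {Proc : Type*}

/-- A multi-evaluation relation over a one-step relation `step`. -/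
def IsEvalRel (step : Proc → Proc → Prop) (R : Set Proc → Set Proc → Prop) : Prop :=
  (∀ p q : Proc, step p q → R {p} {q}) ∧
  (∀ p : Proc, R {p} {p}) ∧
  (∀ (P Q P' Q' : Set Proc) (r : Proc),
    R P (Q ∪ {r}) → R (P' ∪ {r}) Q' → R (P ∪ P') (Q ∪ Q')) ∧
  (∀ P Q P' Q' : Set Proc, R P Q → P ⊆ P' → Q ⊆ Q' → R P' Q')

/-- A pole: a set of processes closed by anti-evaluation. -/
def IsPole (step : Proc → Proc → Prop) (po : Set Proc) : Prop :=
  ∀ p q : Proc, Relation.ReflTransGen step p q → q ∈ po → p ∈ po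

/-- The multi-evaluation relation associated with a realizability structure `S`. -/
def relOf (S : Set (Set Proc)) (P Q : Set Proc) : Prop :=
  ∀ po ∈ S, Q ⊆ po → (P ∩ po).Nonempty

/-- The realizability structure generated by a relation `R`. -/
def genStruct (step : Proc → Proc → Prop) (R : Set Proc → Set Proc → Prop) :
    Set (Set Proc) :=
  {po | IsPole step po ∧ ∀ P Q : Set Proc, R P Q → Q ⊆ po → (P ∩ po).Nonempty}

/-- The relation associated with a realizability structure is a multi-evaluation
relation. -/
theorem stmt_4 {Proc : Type*} (step : Proc → Proc → Prop) (S : Set (Set Proc))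
    (hS : ∀ po ∈ S, IsPole step po) :
    IsEvalRel step (relOf S) := by
  refine ⟨?_, ?_, ?_, ?_⟩
  · intro p q hpq po hpo hsub
    exact ⟨p, rfl, hS po hpo p q (Relation.ReflTransGen.single hpq) (hsub rfl)⟩
  · intro p po hpo hsub
    exact ⟨p, rfl, hsub rfl⟩
  · intro P Q P' Q' r h1 h2 po hpo hsub
    by_cases hr : r ∈ po
    · obtain ⟨x, hxP, hxpo⟩ := h1 po hpo (by
        intro x hx
        rcases hx with hx | hx
        · exact hsub (Or.inl hx)
        · exact hx ▸ hr)
      exact ⟨x, Or.inl hxP, hxpo⟩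
    · obtain ⟨x, hxP, hxpo⟩ := h2 po hpo (fun x hx => hsub (Or.inr hx))
      rcases hxP with hx | hx
      · exact ⟨x, Or.inr hx, hxpo⟩
      · exact absurd hxpo (hx ▸ hr)
  · intro P Q P' Q' h hP hQ po hpo hsub
    obtain ⟨x, hx, hxpo⟩ := h po hpo (fun y hy => hsub (hQ hy))
    exact ⟨x, hP hx, hxpo⟩
end

section
/- For any realizability structure S₀, the realizability structure generated by its associated evaluation relation equals S₀: that is, a pole ⫫ belongs to the structure generated by ⊳_{S₀} if and only if ⫫ ∈ S₀. (Structures are fully determined by their associated multi-evaluation relations.) -/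
variable {Proc : Type*}

/-- The realizability structure generated by the evaluation relation associated with a
realizability structure `S₀` is `S₀` itself. -/
theorem stmt_5 {Proc : Type*} (step : Proc → Proc → Prop) (S₀ : Set (Set Proc))
    (hS₀ : ∀ po ∈ S₀, IsPole step po) :
    genStruct step (relOf S₀) = S₀ := by
  ext po
  constructor
  · rintro ⟨hpole, hclo⟩
    by_contra hpo
    have hrel : relOf S₀ poᶜ po := by
      intro po' hpo' hsub
      have hne : po' ≠ po := fun h => hpo (h ▸ hpo')
      rcases Set.exists_of_ssubset (hsub.ssubset_of_ne (Ne.symm hne)) with ⟨p, hp, hnp⟩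
      exact ⟨p, hnp, hp⟩
    rcases hclo poᶜ po hrel le_rfl with ⟨p, hnp, hp⟩
    exact hnp hp
  · intro hpo
    exact ⟨hS₀ po hpo, fun P Q hR hsub => hR po hpo hsub⟩
end

section
/- If R is a binary relation on sets of processes and R* denotes the smallest multi-evaluation relation containing R, then the realizability structure generated by R* equals the realizability structure generated by R. -/
variable {Proc : Type*}

/-- If `Rstar` is the smallest multi-evaluation relation containing `R`, then the
realizability structures generated by `R` and `Rstar` coincide. -/
theorem stmt_6 {Proc : Type*} (step : Proc → Proc → Prop)
    (R Rstar : Set Proc → Set Proc → Prop)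
    (h₁ : IsEvalRel step Rstar) (h₂ : ∀ P Q, R P Q → Rstar P Q)
    (h₃ : ∀ R' : Set Proc → Set Proc → Prop, IsEvalRel step R' →
      (∀ P Q, R P Q → R' P Q) → ∀ P Q, Rstar P Q → R' P Q) :
    genStruct step Rstar = genStruct step R := by
  apply Set.Subset.antisymm
  · rintro po ⟨hpole, hR⟩
    exact ⟨hpole, fun P Q hPQ hQ => hR P Q (h₂ P Q hPQ) hQ⟩
  · rintro po ⟨hpole, hR⟩
    refine ⟨hpole, fun P Q hPQ hQ => ?_⟩
    have key : IsEvalRel step (relOf (genStruct step R)) := by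
      refine ⟨?_, ?_, ?_, ?_⟩
      · intro p q hst po' ⟨hp', hR'⟩ hQ
        exact ⟨p, rfl, hp' p q (Relation.ReflTransGen.single hst) (hQ rfl)⟩
      · intro p po' _ hQ
        exact ⟨p, rfl, hQ rfl⟩
      · intro P Q P' Q' r hA hB po' hpo' hQQ'
        by_cases hr : r ∈ po'
        · obtain ⟨x, hxP, hxpo⟩ := hA po' hpo' (by
            intro y hy
            rcases hy with hy | hy
            · exact hQQ' (Or.inl hy)
            · exact hy ▸ hr)
          exact ⟨x, Or.inl hxP, hxpo⟩
        · obtain ⟨x, hxP, hxpo⟩ := hB po' hpo' (fun y hy => hQQ' (Or.inr hy))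
          rcases hxP with hx | hx
          · exact ⟨x, Or.inr hx, hxpo⟩
          · exact absurd (hx ▸ hxpo) hr
      · intro P Q P' Q' hPQ hP hQsub po' hpo' hQ'
        obtain ⟨x, hxP, hxpo⟩ := hPQ po' hpo' (fun y hy => hQ' (hQsub hy))
        exact ⟨x, hP hxP, hxpo⟩
    have hcontain : ∀ P Q, R P Q → relOf (genStruct step R) P Q := by
      intro P Q hPQ po' ⟨_, hR'⟩ hQ
      exact hR' P Q hPQ hQ
    exact h₃ _ key hcontain P Q hPQ po ⟨hpole, hR⟩ hQ
end

section
/- Let ⊳ be the smallest evaluation relation containing a generating relation ⊳₁ whose every generating pair has a singleton left-hand side. Then for all sets of processes P, Q: P ⊳ Q if and only if there exists p ∈ P with {p} ⊳ Q. -/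
variable {Proc : Type*}

/-- If `⊳` is the smallest evaluation relation containing a generating relation whose
pairs all have singleton left-hand sides, then `P ⊳ Q` iff some `p ∈ P` has `{p} ⊳ Q`. -/
theorem stmt_8 {Proc : Type*} (step : Proc → Proc → Prop)
    (hdet : ∀ p q q' : Proc, step p q → step p q' → q = q')
    (R₁ Rstar : Set Proc → Set Proc → Prop)
    (hstep : ∀ p q : Proc, step p q → R₁ {p} {q})
    (hsing : ∀ P Q : Set Proc, R₁ P Q → ∃ p : Proc, P = {p})
    (h₁ : IsEvalRel step Rstar) (h₂ : ∀ P Q, R₁ P Q → Rstar P Q)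
    (h₃ : ∀ R' : Set Proc → Set Proc → Prop, IsEvalRel step R' →
      (∀ P Q, R₁ P Q → R' P Q) → ∀ P Q, Rstar P Q → R' P Q) :
    ∀ P Q : Set Proc, Rstar P Q ↔ ∃ p ∈ P, Rstar {p} Q := by
  obtain ⟨hst, hid, hcut, hwk⟩ := h₁
  intro P Q
  constructor
  · refine h₃ (fun P Q => ∃ p ∈ P, Rstar {p} Q) ⟨?_, ?_, ?_, ?_⟩ ?_ P Q
    · exact fun p q h => ⟨p, rfl, hst p q h⟩
    · exact fun p => ⟨p, rfl, hid p⟩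
    · rintro P Q P' Q' r ⟨p, hp, hpQ⟩ ⟨p', hp', hp'Q⟩
      rcases hp' with hp' | hp'
      · exact ⟨p', Or.inr hp', hwk _ _ _ _ hp'Q (subset_refl _) (Set.subset_union_right)⟩
      · refine ⟨p, Or.inl hp, ?_⟩
        rw [Set.mem_singleton_iff] at hp'
        subst hp'
        have := hcut {p} Q (∅ : Set Proc) Q' p' hpQ (by simpa using hp'Q)
        simpa using this
    · rintro P Q P' Q' ⟨p, hp, hpQ⟩ hPP hQQ
      exact ⟨p, hPP hp, hwk _ _ _ _ hpQ (subset_refl _) hQQ⟩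
    · intro P Q h
      obtain ⟨p, rfl⟩ := hsing P Q h
      exact ⟨p, rfl, h₂ _ _ h⟩
  · rintro ⟨p, hp, hpQ⟩
    exact hwk _ _ _ _ hpQ (by simpa using hp) (subset_refl _)
end

section
/- Let ⊳ be the smallest evaluation relation containing a relation ⊳₁ all of whose generating pairs have finite (indeed singleton) left-hand sides and finite right-hand sides. Then ⊳ is compact: whenever P ⊳ Q, there exist finite subsets P₀ ⊆ P and Q₀ ⊆ Q with P₀ ⊳ Q₀. -/
variable {Proc : Type*}

/-- If `⊳` is the smallest evaluation relation containing a generating relation all of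
whose pairs have singleton left-hand sides and finite right-hand sides, then `⊳` is
compact. -/
theorem stmt_9 {Proc : Type*} (step : Proc → Proc → Prop)
    (R₁ Rstar : Set Proc → Set Proc → Prop)
    (hstep : ∀ p q : Proc, step p q → R₁ {p} {q})
    (hfin : ∀ P Q : Set Proc, R₁ P Q → (∃ p : Proc, P = {p}) ∧ Q.Finite)
    (h₁ : IsEvalRel step Rstar) (h₂ : ∀ P Q, R₁ P Q → Rstar P Q)
    (h₃ : ∀ R' : Set Proc → Set Proc → Prop, IsEvalRel step R' →
      (∀ P Q, R₁ P Q → R' P Q) → ∀ P Q, Rstar P Q → R' P Q) :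
    ∀ P Q : Set Proc, Rstar P Q →
      ∃ P₀ Q₀ : Set Proc, P₀.Finite ∧ Q₀.Finite ∧ P₀ ⊆ P ∧ Q₀ ⊆ Q ∧ Rstar P₀ Q₀ := by
  obtain ⟨hs, hid, hcut, hweak⟩ := h₁
  set R' : Set Proc → Set Proc → Prop := fun P Q =>
    ∃ P₀ Q₀ : Set Proc, P₀.Finite ∧ Q₀.Finite ∧ P₀ ⊆ P ∧ Q₀ ⊆ Q ∧ Rstar P₀ Q₀ with hR'
  have hEval : IsEvalRel step R' := by
    refine ⟨?_, ?_, ?_, ?_⟩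
    · intro p q h
      exact ⟨{p}, {q}, Set.finite_singleton p, Set.finite_singleton q,
        subset_rfl, subset_rfl, hs p q h⟩
    · intro p
      exact ⟨{p}, {p}, Set.finite_singleton p, Set.finite_singleton p,
        subset_rfl, subset_rfl, hid p⟩
    · rintro P Q P' Q' r ⟨A, B, hA, hB, hAP, hBQ, hAB⟩ ⟨C, D, hC, hD, hCP, hDQ, hCD⟩
      have h1 : Rstar A ((B ∩ Q) ∪ {r}) := by
        refine hweak A B _ _ hAB subset_rfl ?_
        intro x hx
        rcases hBQ hx with h | h
        · exact Or.inl ⟨hx, h⟩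
        · exact Or.inr h
      have h2 : Rstar ((C ∩ P') ∪ {r}) D := by
        refine hweak C D _ _ hCD ?_ subset_rfl
        intro x hx
        rcases hCP hx with h | h
        · exact Or.inl ⟨hx, h⟩
        · exact Or.inr h
      refine ⟨A ∪ (C ∩ P'), (B ∩ Q) ∪ D, hA.union (hC.inter_of_left _),
        (hB.inter_of_left _).union hD,
        Set.union_subset_union hAP (Set.inter_subset_right),
        Set.union_subset_union (Set.inter_subset_right) hDQ, ?_⟩
      exact hcut A (B ∩ Q) (C ∩ P') D r h1 h2
    · rintro P Q P' Q' ⟨A, B, hA, hB, hAP, hBQ, hAB⟩ hPP hQQ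
      exact ⟨A, B, hA, hB, hAP.trans hPP, hBQ.trans hQQ, hAB⟩
  have hcont : ∀ P Q, R₁ P Q → R' P Q := by
    intro P Q h
    obtain ⟨⟨p, rfl⟩, hQfin⟩ := hfin P Q h
    exact ⟨{p}, Q, Set.finite_singleton p, hQfin, subset_rfl, subset_rfl, h₂ _ _ h⟩
  intro P Q h
  exact h₃ R' hEval hcont P Q h
end

section
/- Let ⊳ be a compact multi-evaluation relation satisfying the property that P ⊳ Q iff some p ∈ P has {p} ⊳ Q. Then the set ⫫ = { p : {p} ⊳ ∅ } belongs to the realizability structure generated by ⊳, and it is contained in every pole of that structure; i.e., ⫫ is the smallest pole of the generated structure. -/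
variable {Proc : Type*}

/-! Cut against `{q} ⊳ ∅` removes `q` from the right-hand side of `P ⊳ Q`, so a finite
`Q ⊆ ⫫` can be removed entirely. By compactness, `P ⊳ Q` with `Q ⊆ ⫫` thus yields `P₀ ⊳ ∅` for
some `P₀ ⊆ P`, and the singleton property picks `p ∈ P₀` with `{p} ⊳ ∅`. Closure under
anti-evaluation is the same cut applied to `{p} ⊳ {q}`. Minimality holds for any generated
structure: apply the defining property of a pole to `{p} ⊳ ∅`. -/

namespace IsEvalRel

variable {step : Proc → Proc → Prop} {R : Set Proc → Set Proc → Prop}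

theorem cut_insert (hR : IsEvalRel step R) {P Q : Set Proc} {r : Proc}
    (hPQ : R P (insert r Q)) (hr : R {r} ∅) : R P Q := by
  simpa using hR.2.2.1 P Q ∅ ∅ r (by rwa [Set.union_singleton]) (by rwa [Set.empty_union])

theorem cut_of_finite (hR : IsEvalRel step R) {Q : Set Proc} (hQ : Q.Finite)
    (hQR : ∀ q ∈ Q, R {q} ∅) {P : Set Proc} (hPQ : R P Q) : R P ∅ := by
  induction Q, hQ using Set.Finite.induction_on generalizing P with
  | empty => exact hPQ
  | @insert r Q _ _ ih =>
    exact ih (fun q hq => hQR q (Set.mem_insert_of_mem r hq))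
      (hR.cut_insert hPQ (hQR r (Set.mem_insert r Q)))

theorem isPole (hR : IsEvalRel step R) : IsPole step {p | R {p} ∅} := by
  intro p q hpq hq
  induction hpq using Relation.ReflTransGen.head_induction_on with
  | refl => exact hq
  | head hbc _ ih => exact hR.cut_insert (by simpa using hR.1 _ _ hbc) ih

theorem setOf_mem_genStruct (hR : IsEvalRel step R)
    (hcompact : ∀ P Q : Set Proc, R P Q → ∃ P₀ ⊆ P, ∃ Q₀ ⊆ Q, Q₀.Finite ∧ R P₀ Q₀)
    (hsing : ∀ P : Set Proc, R P ∅ → ∃ p ∈ P, R {p} ∅) :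
    {p | R {p} ∅} ∈ genStruct step R := by
  refine ⟨hR.isPole, fun P Q hPQ hQ => ?_⟩
  obtain ⟨P₀, hP₀P, Q₀, hQ₀Q, hQ₀, hP₀Q₀⟩ := hcompact P Q hPQ
  obtain ⟨p, hp, hp_sn⟩ := hsing P₀ (hR.cut_of_finite hQ₀ (fun q hq => hQ (hQ₀Q hq)) hP₀Q₀)
  exact ⟨p, hP₀P hp, hp_sn⟩

end IsEvalRel

theorem setOf_subset_of_mem_genStruct {step : Proc → Proc → Prop}
    {R : Set Proc → Set Proc → Prop} {po : Set Proc} (hpo : po ∈ genStruct step R) :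
    {p | R {p} ∅} ⊆ po := fun p hp => by
  obtain ⟨_, rfl, hp_po⟩ := hpo.2 {p} ∅ hp (Set.empty_subset po)
  exact hp_po

/-- For a compact multi-evaluation relation `⊳` satisfying `P ⊳ Q ↔ ∃ p ∈ P, {p} ⊳ Q`,
the set `{p | {p} ⊳ ∅}` is the smallest pole of the generated realizability
structure. -/
theorem stmt_10 {Proc : Type*} (step : Proc → Proc → Prop)
    (R : Set Proc → Set Proc → Prop) (hR : IsEvalRel step R)
    (hcompact : ∀ P Q : Set Proc, R P Q →
      ∃ P₀ Q₀ : Set Proc, P₀.Finite ∧ Q₀.Finite ∧ P₀ ⊆ P ∧ Q₀ ⊆ Q ∧ R P₀ Q₀)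
    (hsing : ∀ P Q : Set Proc, R P Q ↔ ∃ p ∈ P, R {p} Q) :
    {p : Proc | R {p} ∅} ∈ genStruct step R ∧
      ∀ po ∈ genStruct step R, {p : Proc | R {p} ∅} ⊆ po := by
  refine ⟨hR.setOf_mem_genStruct (fun P Q hPQ => ?_) (fun P => (hsing P ∅).1),
    fun _ => setOf_subset_of_mem_genStruct⟩
  obtain ⟨P₀, Q₀, -, hQ₀, hP₀P, hQ₀Q, hP₀Q₀⟩ := hcompact P Q hPQ
  exact ⟨P₀, hP₀P, Q₀, hQ₀Q, hQ₀, hP₀Q₀⟩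
end
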